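/- The upward-closure family is an approximate ghost multiplication: let ⪯ be an estimator on the flow monoid and define, for flow graphs t and u, [t]♯(u) = { u[in] | u.in ⪯^{t.X} in } if there exists s ⪯ctx t with s ⋆ u defined or there exists v ⪯ctx u with v ⋆ t defined, and [t]♯(u) = ⊤ otherwise. Then the family [·]♯ is an approximate ghost multiplication, i.e. t ⌢ u ⊑ t ⌢♯ u := [u]♯(t) ⋆ [t]♯(u) for all t, u; in particular, if there exists s ⪯ctx t with s ⋆ u defined, then t ⌢ u ∈ [u]♯(t) ⋆ [t]♯(u). -/

import Mathlib

/-!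
Suppose `s ⪯ctx t` and `s ⋆ u` is defined. The witnesses for `t ⌢ u ∈ [u]♯(t) ⋆ [t]♯(u)` are `t`
and `u` with the inflow each receives from the other replaced by the outflow of the other in
`t ⌢ u`. They compose to `t ⌢ u`, since on the nodes of `t` the flow of `t ⌢ u` is the least flow
of `t` in that context, and symmetrically for `u`.

The new inflows are `⪯`-above the old ones. On the nodes of `u`, the flow of `t ⌢ u` is the join
of the Kleene iterates of a step on `u` in which `t` is replaced by its transfer function. Since
`s ⪯ctx t`, these iterates for `s ⌢ u` and `t ⌢ u` are `⪯`-related, and stability of `⪯` under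
joins gives the same for the flows. Hence the outflow of `u` into `t` grows, and the outflow of
`t` into `u` dominates that of `s` because the transfer functions of `s` and `t` are related.
The case where some `v ⪯ctx u` composes with `t` is symmetric; otherwise `[u]♯(t) = ⊤`.
-/

universe u

/-- A flow monoid: a commutative monoid whose natural order
(`m ≤ n ↔ ∃ o, n = m + o`) is a partial order that forms an ω-cpo, with
continuous addition. `csup` assigns to every ascending chain its join. -/
class FlowMonoid (M : Type u) extends AddCommMonoid M, PartialOrder M, OrderBot M,
    IsOrderedAddMonoid M, CanonicallyOrderedAdd M where
  /-- The join of an ascending chain. -/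
  csup : (ℕ → M) → M
  isLUB_csup : ∀ K : ℕ → M, Monotone K → IsLUB (Set.range K) (csup K)
  add_csup : ∀ (n : M) (K : ℕ → M), Monotone K → n + csup K = csup fun i => n + K i

variable {M : Type u} [FlowMonoid M]

/-- Continuity: `f` commutes with joins of ascending chains. -/
def FMCont (f : M → M) : Prop :=
  ∀ K : ℕ → M, Monotone K →
    IsLUB (Set.range fun i => f (K i)) (f (FlowMonoid.csup K))

/-- A flow graph: a finite set of nodes `X ⊆ ℕ`, continuous edge functions, and
a finitely supported inflow from sources outside `X` into `X`. (The edge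
functions of sources outside `X` and the inflow outside its domain are
canonically zero.) -/
structure FlowGraph (M : Type u) [FlowMonoid M] where
  /-- The nodes. -/
  X : Finset ℕ
  /-- The edge functions: `E x y` labels the edge from `x` to `y`. -/
  E : ℕ → ℕ → M → M
  /-- The inflow: `inflow y x` is the flow the graph receives at `x ∈ X` from the
  external node `y ∉ X`. -/
  inflow : ℕ → ℕ → M
  econt : ∀ x y, x ∈ X → FMCont (E x y)
  edom : ∀ x y, x ∉ X → E x y = fun _ => 0
  inflow_fin : ∀ x, (Function.support fun y => inflow y x).Finite
  inflow_dom : ∀ y x, inflow y x ≠ 0 → y ∉ X ∧ x ∈ X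

namespace FlowGraph

/-- One step of the flow fixed-point computation, with inflow `i`. -/
noncomputable def stepWith (h : FlowGraph M) (i : ℕ → ℕ → M) (c : ℕ → M) : ℕ → M :=
  fun x => if x ∈ h.X then (∑ᶠ y, i y x) + ∑ y ∈ h.X, h.E y x (c y) else 0

/-- The flow for a custom inflow `i`, obtained by Kleene iteration: the least
function satisfying the flow equation. -/
noncomputable def flowWith (h : FlowGraph M) (i : ℕ → ℕ → M) : ℕ → M :=
  fun x => FlowMonoid.csup fun n => (h.stepWith i)^[n] (fun _ => 0) x

/-- The flow of a flow graph. -/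
noncomputable def flow (h : FlowGraph M) : ℕ → M := h.flowWith h.inflow

/-- The outflow of a flow graph: `out x y = E x y (flow x)`. -/
noncomputable def out (h : FlowGraph M) (x y : ℕ) : M := h.E x y (h.flow x)

/-- The transfer function: maps an inflow `i` to the resulting outflow at `y`. -/
noncomputable def tf (h : FlowGraph M) (i : ℕ → ℕ → M) (y : ℕ) : M :=
  ∑ x ∈ h.X, h.E x y (h.flowWith i x)

/-- The ghost multiplication of flow graphs: disjoint union of the node sets and
edges; the inflow of each component is restricted to sources outside the other. -/
def gmul (s t : FlowGraph M) : FlowGraph M where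
  X := s.X ∪ t.X
  E := fun x y => if x ∈ s.X then s.E x y else t.E x y
  inflow := fun y x => if y ∈ s.X ∪ t.X then 0 else s.inflow y x + t.inflow y x
  econt := by
    intro x y hx
    try dsimp only
    by_cases hs : x ∈ s.X
    · rw [if_pos hs]; exact s.econt x y hs
    · rw [if_neg hs]
      rcases Finset.mem_union.mp hx with h | h
      · exact absurd h hs
      · exact t.econt x y h
  edom := by
    intro x y hx
    try dsimp only
    rw [if_neg fun h => hx (Finset.mem_union_left _ h)]
    exact t.edom x y fun h => hx (Finset.mem_union_right _ h)
  inflow_fin := by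
    intro x
    refine Set.Finite.subset ((s.inflow_fin x).union (t.inflow_fin x)) ?_
    intro y hy
    rw [Function.mem_support] at hy
    try dsimp only at hy
    by_cases hmem : y ∈ s.X ∪ t.X
    · rw [if_pos hmem] at hy; exact absurd rfl hy
    · rw [if_neg hmem] at hy
      by_cases h1 : s.inflow y x = 0
      · have h2 : t.inflow y x ≠ 0 := fun h2 => hy (by rw [h1, h2, add_zero])
        exact Set.mem_union_right _ (Function.mem_support.mpr h2)
      · exact Set.mem_union_left _ (Function.mem_support.mpr h1)
  inflow_dom := by
    intro y x hy
    try dsimp only at hy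
    by_cases hmem : y ∈ s.X ∪ t.X
    · rw [if_pos hmem] at hy; exact absurd rfl hy
    · rw [if_neg hmem] at hy
      refine ⟨hmem, ?_⟩
      by_cases h1 : s.inflow y x = 0
      · have h2 : t.inflow y x ≠ 0 := fun h2 => hy (by rw [h1, h2, add_zero])
        exact Finset.mem_union_right _ (t.inflow_dom y x h2).2
      · exact Finset.mem_union_left _ (s.inflow_dom y x h1).2

/-- Definedness of the multiplication `s ⋆ t` of flow graphs: the ghost
multiplication is defined, the inflow expectation of each graph at the mutual
boundary matches the outflow of the other, and the flows are preserved in the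
composition (whose result is then `gmul s t`). -/
def MDef (s t : FlowGraph M) : Prop :=
  Disjoint s.X t.X ∧
  (∀ x ∈ s.X, ∀ y ∈ t.X, s.out x y = t.inflow x y ∧ t.out y x = s.inflow y x) ∧
  (∀ x ∈ s.X, (gmul s t).flow x = s.flow x) ∧
  (∀ y ∈ t.X, (gmul s t).flow y = t.flow y)

end FlowGraph

/-- An estimator on the flow monoid: a precongruence that is stable under joins
of ascending chains and over which the edge functions (i.e. the continuous
functions) are monotonic. -/
def IsEstimator (r : M → M → Prop) : Prop :=
  -- (E1) reflexive and transitive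
  (∀ m : M, r m m) ∧
  (∀ m n o : M, r m n → r n o → r m o) ∧
  -- (E2) compatible with addition
  (∀ m n o : M, r m n → r (m + o) (n + o)) ∧
  -- (E3) stable under joins of ascending chains
  (∀ K L : ℕ → M, Monotone K → Monotone L → (∀ i, r (K i) (L i)) →
    r (FlowMonoid.csup K) (FlowMonoid.csup L)) ∧
  -- (E4) edge functions are monotonic
  (∀ f : M → M, FMCont f → ∀ m n : M, r m n → r (f m) (f n))

/-- The estimator induced on flow graphs: same nodes, same inflow, and the
transfer functions are related for every smaller inflow. -/
def ctxLe (r : M → M → Prop) (s₁ s₂ : FlowGraph M) : Prop :=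
  s₁.X = s₂.X ∧ s₁.inflow = s₂.inflow ∧
  ∀ i : ℕ → ℕ → M, (∀ y x, i y x ≤ s₁.inflow y x) →
    ∀ y, y ∉ s₁.X → r (s₁.tf i y) (s₂.tf i y)

/-- `inflowLe r Y X i₁ i₂` is the relation `i₁ ⪯^Y i₂` on inflows over node set
`X`: the inflows agree on all sources outside `Y`, and for each target the sums
of the contributions from `Y` are related by `r`. -/
def inflowLe (r : M → M → Prop) (Y X : Finset ℕ) (i₁ i₂ : ℕ → ℕ → M) : Prop :=
  (∀ y, y ∉ Y → ∀ x, i₁ y x = i₂ y x) ∧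
  (∀ x ∈ X, r (∑ y ∈ Y, i₁ y x) (∑ y ∈ Y, i₂ y x))

attribute [local instance] Classical.propDecidable

/-- Predicates over flow graphs: sets of flow graphs plus a top element `⊤`. -/
abbrev FPred (M : Type u) [FlowMonoid M] := WithTop (Set (FlowGraph M))

/-- Membership of a flow graph in a predicate; every flow graph satisfies `⊤`. -/
def memFP (s : FlowGraph M) (a : FPred M) : Prop :=
  WithTop.recTopCoe True (fun a' => s ∈ a') a

/-- The ghost multiplication `⌢` lifted to predicates (`⊤` is absorbing). -/
def gstarFP (a b : FPred M) : FPred M :=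
  WithTop.recTopCoe ⊤
    (fun a' => WithTop.recTopCoe ⊤
      (fun b' => (({w | ∃ s ∈ a', ∃ t ∈ b', Disjoint s.X t.X ∧ w = FlowGraph.gmul s t} :
        Set (FlowGraph M)) : FPred M)) b) a

/-- The multiplication `⋆` lifted to predicates (`⊤` is absorbing). -/
def starFP (a b : FPred M) : FPred M :=
  WithTop.recTopCoe ⊤
    (fun a' => WithTop.recTopCoe ⊤
      (fun b' => (({w | ∃ s ∈ a', ∃ t ∈ b', FlowGraph.MDef s t ∧ w = FlowGraph.gmul s t} :
        Set (FlowGraph M)) : FPred M)) b) a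

/-- The upward-closure family `[t]♯(u)`: all of `u` with its inflow increased
according to `⪯^{t.X}`, provided some `s ⪯ctx t` composes with `u` or some
`v ⪯ctx u` composes with `t`; otherwise `⊤`. -/
noncomputable def gabs (r : M → M → Prop) (t u : FlowGraph M) : FPred M :=
  if (∃ s : FlowGraph M, ctxLe r s t ∧ FlowGraph.MDef s u) ∨
     (∃ v : FlowGraph M, ctxLe r v u ∧ FlowGraph.MDef v t) then
    (({w : FlowGraph M | w.X = u.X ∧ w.E = u.E ∧ inflowLe r t.X u.X u.inflow w.inflow} :
      Set (FlowGraph M)) : FPred M)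
  else ⊤

open FlowMonoid FlowGraph Function

namespace FlowMonoid

theorem le_csup {K : ℕ → M} (hK : Monotone K) (n : ℕ) : K n ≤ csup K :=
  (isLUB_csup K hK).1 ⟨n, rfl⟩

theorem csup_le {K : ℕ → M} (hK : Monotone K) {b : M} (h : ∀ n, K n ≤ b) : csup K ≤ b :=
  (isLUB_csup K hK).2 (Set.forall_mem_range.2 h)

theorem csup_mono {K L : ℕ → M} (hK : Monotone K) (hL : Monotone L) (h : K ≤ L) :
    csup K ≤ csup L :=
  csup_le hK fun n => (h n).trans (le_csup hL n)

theorem csup_const (c : M) : csup (fun _ : ℕ => c) = c :=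
  le_antisymm (csup_le monotone_const fun _ => le_rfl) (le_csup monotone_const 0)

theorem csup_succ {K : ℕ → M} (hK : Monotone K) : csup (fun n => K (n + 1)) = csup K := by
  have hK' : Monotone fun n => K (n + 1) := fun a b h => hK (Nat.succ_le_succ h)
  exact le_antisymm (csup_le hK' fun n => le_csup hK (n + 1))
    (csup_le hK fun n => (hK n.le_succ).trans (le_csup hK' n))

theorem csup_add {K L : ℕ → M} (hK : Monotone K) (hL : Monotone L) :
    csup (fun n => K n + L n) = csup K + csup L := by
  have hKL : Monotone fun n => K n + L n := fun a b h => add_le_add (hK h) (hL h)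
  refine le_antisymm (csup_le hKL fun n => add_le_add (le_csup hK n) (le_csup hL n)) ?_
  rw [add_csup _ _ hL]
  refine csup_le (fun a b h => add_le_add le_rfl (hL h)) fun i => ?_
  rw [add_comm, add_csup _ _ hK]
  refine csup_le (fun a b h => add_le_add le_rfl (hK h)) fun j => ?_
  calc L i + K j ≤ K (max i j) + L (max i j) := by
        rw [add_comm]; exact add_le_add (hK (le_max_right _ _)) (hL (le_max_left _ _))
    _ ≤ _ := le_csup hKL _

theorem csup_sum {α : Type*} (F : Finset α) (f : α → ℕ → M) (hf : ∀ a ∈ F, Monotone (f a)) :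
    csup (fun n => ∑ a ∈ F, f a n) = ∑ a ∈ F, csup (f a) := by
  classical
  induction F using Finset.cons_induction with
  | empty => simpa using csup_const (0 : M)
  | cons a F ha ih =>
    simp only [Finset.sum_cons]
    rw [← ih fun b hb => hf b (Finset.mem_cons_of_mem hb)]
    exact csup_add (hf a (Finset.mem_cons_self a F))
      fun x y h => Finset.sum_le_sum fun b hb => hf b (Finset.mem_cons_of_mem hb) h

end FlowMonoid

theorem FMCont.monotone {f : M → M} (hf : FMCont f) : Monotone f := by
  intro m n hmn
  set K : ℕ → M := fun i => if i = 0 then m else n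
  have hK : Monotone K := by
    intro i j hij
    simp only [K]
    split_ifs <;> first | exact le_rfl | exact hmn | omega
  have hcsup : csup K = n :=
    le_antisymm (csup_le hK fun i => by simp only [K]; split_ifs <;> simp [hmn])
      (le_csup hK 1)
  simpa [K, hcsup] using (hf K hK).1 ⟨0, rfl⟩

theorem FMCont.map_csup {f : M → M} (hf : FMCont f) {K : ℕ → M} (hK : Monotone K) :
    f (csup K) = csup fun n => f (K n) :=
  (hf K hK).unique (isLUB_csup _ fun _ _ h => hf.monotone (hK h))

theorem finsum_le_finsum_of_le {f g : ℕ → M} (hg : (support g).Finite) (h : f ≤ g) :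
    ∑ᶠ y, f y ≤ ∑ᶠ y, g y :=
  finsum_le_finsum' (hg.subset fun y hy hgy => hy (le_antisymm (hgy ▸ h y) zero_le)) hg h

section Kleene

variable {F G : (ℕ → M) → ℕ → M}

noncomputable def kleeneFix (F : (ℕ → M) → ℕ → M) : ℕ → M :=
  fun x => csup fun n => F^[n] 0 x

theorem monotone_iterate_zero (hF : Monotone F) (x : ℕ) : Monotone fun n => F^[n] 0 x :=
  fun _ _ h => hF.monotone_iterate_of_le_map (fun _ => zero_le) h x

theorem iterate_le_kleeneFix (hF : Monotone F) (n : ℕ) : F^[n] 0 ≤ kleeneFix F :=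
  fun x => le_csup (monotone_iterate_zero hF x) n

theorem kleeneFix_le {d : ℕ → M} (hF : Monotone F) (hd : F d ≤ d) : kleeneFix F ≤ d := by
  have hiter : ∀ n, F^[n] 0 ≤ d := by
    intro n
    induction n with
    | zero => exact fun _ => zero_le
    | succ n ih => rw [iterate_succ_apply']; exact (hF ih).trans hd
  exact fun x => csup_le (monotone_iterate_zero hF x) fun n => hiter n x

theorem kleeneFix_mono (hF : Monotone F) (hG : Monotone G) (h : F ≤ G) :
    kleeneFix F ≤ kleeneFix G :=
  fun x => csup_mono (monotone_iterate_zero hF x) (monotone_iterate_zero hG x)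
    fun n => hF.iterate_le_of_le h n 0 x

end Kleene

namespace IsEstimator

variable {r : M → M → Prop}

theorem refl (hr : IsEstimator r) (m : M) : r m m := hr.1 m

theorem trans (hr : IsEstimator r) {m n o : M} (h₁ : r m n) (h₂ : r n o) : r m o :=
  hr.2.1 m n o h₁ h₂

theorem add (hr : IsEstimator r) {m n o p : M} (h₁ : r m n) (h₂ : r o p) : r (m + o) (n + p) := by
  refine hr.trans (hr.2.2.1 m n o h₁) ?_
  rw [add_comm n o, add_comm n p]
  exact hr.2.2.1 o p n h₂

theorem sum (hr : IsEstimator r) {α : Type*} (F : Finset α) {f g : α → M}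
    (h : ∀ a ∈ F, r (f a) (g a)) : r (∑ a ∈ F, f a) (∑ a ∈ F, g a) := by
  classical
  induction F using Finset.cons_induction with
  | empty => simpa using hr.refl 0
  | cons a F ha ih =>
    rw [Finset.sum_cons, Finset.sum_cons]
    exact hr.add (h a (Finset.mem_cons_self a F)) (ih fun b hb => h b (Finset.mem_cons_of_mem hb))

theorem csup (hr : IsEstimator r) {K L : ℕ → M} (hK : Monotone K) (hL : Monotone L)
    (h : ∀ n, r (K n) (L n)) : r (FlowMonoid.csup K) (FlowMonoid.csup L) :=
  hr.2.2.2.1 K L hK hL h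

theorem map (hr : IsEstimator r) {f : M → M} (hf : FMCont f) {m n : M} (h : r m n) :
    r (f m) (f n) :=
  hr.2.2.2.2 f hf m n h

theorem kleeneFix (hr : IsEstimator r) {F G : (ℕ → M) → ℕ → M} (hF : Monotone F)
    (hG : Monotone G)
    (hstep : ∀ c c', c ≤ _root_.kleeneFix F → (∀ x, r (c x) (c' x)) → ∀ x, r (F c x) (G c' x))
    (x : ℕ) : r (_root_.kleeneFix F x) (_root_.kleeneFix G x) := by
  have hiter : ∀ n x, r (F^[n] 0 x) (G^[n] 0 x) := by
    intro n
    induction n with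
    | zero => exact fun x => hr.refl _
    | succ n ih =>
      rw [iterate_succ_apply', iterate_succ_apply']
      exact hstep _ _ (iterate_le_kleeneFix hF n) ih
  exact hr.csup (monotone_iterate_zero hF x) (monotone_iterate_zero hG x) fun n => hiter n x

end IsEstimator

namespace FlowGraph

variable {h : FlowGraph M} {i i' : ℕ → ℕ → M} {c c' : ℕ → M} {x y : ℕ}

theorem ext {a b : FlowGraph M} (hX : a.X = b.X) (hE : a.E = b.E) (hin : a.inflow = b.inflow) :
    a = b := by
  cases a
  cases b
  subst hX hE hin
  rfl

theorem inflow_eq_zero_of_mem (hy : y ∈ h.X) : h.inflow y x = 0 :=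
  by_contra fun hne => (h.inflow_dom y x hne).1 hy

theorem inflow_eq_zero_of_notMem (hx : x ∉ h.X) : h.inflow y x = 0 :=
  by_contra fun hne => hx (h.inflow_dom y x hne).2

theorem stepWith_of_mem (hx : x ∈ h.X) :
    h.stepWith i c x = (∑ᶠ y, i y x) + ∑ y ∈ h.X, h.E y x (c y) :=
  if_pos hx

theorem stepWith_of_notMem (hx : x ∉ h.X) : h.stepWith i c x = 0 :=
  if_neg hx

theorem stepWith_congr (hc : ∀ y ∈ h.X, c y = c' y) : h.stepWith i c = h.stepWith i c' := by
  funext x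
  by_cases hx : x ∈ h.X
  · rw [stepWith_of_mem hx, stepWith_of_mem hx, Finset.sum_congr rfl fun y hy => by rw [hc y hy]]
  · rw [stepWith_of_notMem hx, stepWith_of_notMem hx]

theorem stepWith_le_stepWith (hi : ∀ x ∈ h.X, ∑ᶠ y, i y x ≤ ∑ᶠ y, i' y x)
    (hc : ∀ y ∈ h.X, c y ≤ c' y) : h.stepWith i c ≤ h.stepWith i' c' := by
  intro x
  by_cases hx : x ∈ h.X
  · rw [stepWith_of_mem hx, stepWith_of_mem hx]
    exact add_le_add (hi x hx)
      (Finset.sum_le_sum fun y hy => (h.econt y x hy).monotone (hc y hy))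
  · rw [stepWith_of_notMem hx]
    exact zero_le

theorem monotone_stepWith : Monotone (h.stepWith i) :=
  fun _ _ hc => stepWith_le_stepWith (fun _ _ => le_rfl) fun y _ => hc y

theorem stepWith_flowWith : h.stepWith i (h.flowWith i) = h.flowWith i := by
  funext x
  by_cases hx : x ∈ h.X
  · set K : ℕ → ℕ → M := fun n => (h.stepWith i)^[n] 0
    have hK : ∀ y, Monotone fun n => K n y := monotone_iterate_zero monotone_stepWith
    have hEK : ∀ y ∈ h.X, Monotone fun n => h.E y x (K n y) :=
      fun y hy _ _ hmn => (h.econt y x hy).monotone (hK y hmn)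
    calc h.stepWith i (h.flowWith i) x
        = (∑ᶠ y, i y x) + ∑ y ∈ h.X, csup fun n => h.E y x (K n y) := by
          rw [stepWith_of_mem hx]
          exact congrArg _ (Finset.sum_congr rfl fun y hy => (h.econt y x hy).map_csup (hK y))
      _ = csup fun n => (∑ᶠ y, i y x) + ∑ y ∈ h.X, h.E y x (K n y) := by
          rw [← csup_sum _ _ hEK,
            add_csup _ _ fun _ _ hmn => Finset.sum_le_sum fun y hy => hEK y hy hmn]
      _ = csup fun n => K (n + 1) x := by
          simp only [K, iterate_succ_apply', stepWith_of_mem hx]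
      _ = h.flowWith i x := csup_succ (hK x)
  · have hzero : ∀ n, (h.stepWith i)^[n] 0 x = 0 := fun n => by
      cases n with
      | zero => rfl
      | succ n => rw [iterate_succ_apply', stepWith_of_notMem hx]
    rw [stepWith_of_notMem hx]
    exact (csup_const 0).symm.trans (congrArg csup (funext hzero).symm)

theorem flowWith_le {d : ℕ → M} (hd : h.stepWith i d ≤ d) : h.flowWith i ≤ d :=
  kleeneFix_le monotone_stepWith hd

theorem flowWith_mono (hi' : ∀ x, (support fun y => i' y x).Finite) (hi : i ≤ i') :
    h.flowWith i ≤ h.flowWith i' :=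
  kleeneFix_mono monotone_stepWith monotone_stepWith fun _ =>
    stepWith_le_stepWith (fun x _ => finsum_le_finsum_of_le (hi' x) fun y => hi y x)
      fun _ _ => le_rfl

end FlowGraph

namespace IsEstimator

variable {r : M → M → Prop} {h : FlowGraph M} {i i' : ℕ → ℕ → M} {c c' : ℕ → M}

theorem stepWith (hr : IsEstimator r) (hi : ∀ x ∈ h.X, r (∑ᶠ y, i y x) (∑ᶠ y, i' y x))
    (hc : ∀ y ∈ h.X, r (c y) (c' y)) (x : ℕ) : r (h.stepWith i c x) (h.stepWith i' c' x) := by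
  by_cases hx : x ∈ h.X
  · rw [stepWith_of_mem hx, stepWith_of_mem hx]
    exact hr.add (hi x hx) (hr.sum _ fun y hy => hr.map (h.econt y x hy) (hc y hy))
  · rw [stepWith_of_notMem hx, stepWith_of_notMem hx]
    exact hr.refl 0

theorem flowWith (hr : IsEstimator r) (hi : ∀ x ∈ h.X, r (∑ᶠ y, i y x) (∑ᶠ y, i' y x))
    (x : ℕ) : r (h.flowWith i x) (h.flowWith i' x) :=
  hr.kleeneFix monotone_stepWith monotone_stepWith
    (fun _ _ _ hc => hr.stepWith hi fun y _ => hc y) x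

theorem tf (hr : IsEstimator r) (hi : ∀ x ∈ h.X, r (∑ᶠ y, i y x) (∑ᶠ y, i' y x)) (y : ℕ) :
    r (h.tf i y) (h.tf i' y) :=
  hr.sum _ fun x hx => hr.map (h.econt x y hx) (hr.flowWith hi x)

end IsEstimator

namespace FlowGraph

variable {s u a b : FlowGraph M} {c d d' q : ℕ → M} {x y : ℕ}

theorem gmul_comm (hd : Disjoint a.X b.X) : gmul a b = gmul b a := by
  refine ext (Finset.union_comm _ _) ?_ ?_
  · funext x y
    show (if x ∈ a.X then a.E x y else b.E x y) = (if x ∈ b.X then b.E x y else a.E x y)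
    by_cases hxa : x ∈ a.X
    · rw [if_pos hxa, if_neg (Finset.disjoint_left.mp hd hxa)]
    · by_cases hxb : x ∈ b.X
      · rw [if_neg hxa, if_pos hxb]
      · rw [if_neg hxa, if_neg hxb, a.edom x y hxa, b.edom x y hxb]
  · funext y x
    show (if y ∈ a.X ∪ b.X then 0 else a.inflow y x + b.inflow y x) =
      (if y ∈ b.X ∪ a.X then 0 else b.inflow y x + a.inflow y x)
    rw [Finset.union_comm b.X a.X, add_comm]

theorem MDef.symm (h : MDef a b) : MDef b a := by
  obtain ⟨hd, hbd, hfa, hfb⟩ := h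
  refine ⟨hd.symm, fun x hx y hy => (hbd y hy x hx).symm, ?_, ?_⟩ <;>
    rw [gmul_comm hd.symm] <;> assumption

noncomputable def contextInflow (a b : FlowGraph M) (d : ℕ → M) : ℕ → ℕ → M :=
  fun y x => if y ∈ b.X then (if x ∈ a.X then b.E y x (d y) else 0) else a.inflow y x

theorem contextInflow_of_mem (hy : y ∈ b.X) (hx : x ∈ a.X) :
    contextInflow a b d y x = b.E y x (d y) := by
  rw [contextInflow, if_pos hy, if_pos hx]

theorem contextInflow_of_notMem (hy : y ∉ b.X) : contextInflow a b d y x = a.inflow y x :=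
  if_neg hy

theorem contextInflow_congr (h : ∀ y ∈ b.X, d y = d' y) :
    contextInflow a b d = contextInflow a b d' := by
  funext y x
  by_cases hy : y ∈ b.X
  · simp only [contextInflow, if_pos hy, h y hy]
  · rw [contextInflow_of_notMem hy, contextInflow_of_notMem hy]

theorem contextInflow_mono (h : ∀ y ∈ b.X, d y ≤ d' y) :
    contextInflow a b d ≤ contextInflow a b d' := by
  intro y x
  by_cases hy : y ∈ b.X
  · by_cases hx : x ∈ a.X
    · rw [contextInflow_of_mem hy hx, contextInflow_of_mem hy hx]
      exact (b.econt y x hy).monotone (h y hy)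
    · simp only [contextInflow, if_pos hy, if_neg hx, le_rfl]
  · rw [contextInflow_of_notMem hy, contextInflow_of_notMem hy]

theorem finite_support_contextInflow (x : ℕ) :
    (support fun y => contextInflow a b d y x).Finite := by
  refine ((b.X : Set ℕ).toFinite.union (a.inflow_fin x)).subset fun y hy => ?_
  by_cases hyb : y ∈ b.X
  · exact Or.inl hyb
  · exact Or.inr (by rwa [mem_support, contextInflow_of_notMem hyb] at hy)

theorem finsum_contextInflow (hx : x ∈ a.X) :
    ∑ᶠ y, contextInflow a b d y x =
      (∑ y ∈ b.X, b.E y x (d y)) + ∑ᶠ y, if y ∈ b.X then 0 else a.inflow y x := by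
  have hsplit : (fun y => contextInflow a b d y x) =
      fun y => (if y ∈ b.X then b.E y x (d y) else 0) + if y ∈ b.X then 0 else a.inflow y x := by
    funext y
    by_cases hy : y ∈ b.X <;> simp [contextInflow, hy, hx]
  have hfin : (support fun y => if y ∈ b.X then b.E y x (d y) else 0) ⊆ b.X :=
    fun y hy => by_contra fun hyb => hy (if_neg hyb)
  rw [hsplit, finsum_add_distrib ((b.X : Set ℕ).toFinite.subset hfin)
      ((a.inflow_fin x).subset fun y hy => by by_cases hyb : y ∈ b.X <;> simp_all),
    finsum_eq_sum_of_support_subset _ hfin]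
  exact congrArg (· + _) (Finset.sum_congr rfl fun y hy => if_pos hy)

theorem stepWith_gmul (hd : Disjoint a.X b.X) (hx : x ∈ a.X) :
    (gmul a b).stepWith (gmul a b).inflow c x = a.stepWith (contextInflow a b c) c x := by
  have hxb : x ∉ b.X := Finset.disjoint_left.mp hd hx
  have hinflow :
      (fun y => (gmul a b).inflow y x) = fun y => if y ∈ b.X then 0 else a.inflow y x := by
    funext y
    by_cases hyb : y ∈ b.X
    · simp [gmul, hyb]
    by_cases hya : y ∈ a.X
    · simp [gmul, hya, hyb, inflow_eq_zero_of_mem hya]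
    · simp [gmul, hya, hyb, inflow_eq_zero_of_notMem hxb]
  have hE : ∑ y ∈ (gmul a b).X, (gmul a b).E y x (c y) =
      (∑ y ∈ a.X, a.E y x (c y)) + ∑ y ∈ b.X, b.E y x (c y) := by
    refine (Finset.sum_union hd).trans (congrArg₂ (· + ·) ?_ ?_) <;>
      refine Finset.sum_congr rfl fun y hy => ?_
    · simp [gmul, hy]
    · simp [gmul, Finset.disjoint_right.mp hd hy]
  rw [stepWith_of_mem (Finset.mem_union_left _ hx), stepWith_of_mem hx, hinflow, hE,
    finsum_contextInflow hx]
  abel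

theorem monotone_flowWith_contextInflow :
    Monotone fun q => a.flowWith (contextInflow a b q) :=
  fun _ _ hq => flowWith_mono (fun _ => finite_support_contextInflow _)
    (contextInflow_mono fun y _ => hq y)

noncomputable def extendFlow (a b : FlowGraph M) (q : ℕ → M) : ℕ → M :=
  fun y => if y ∈ a.X then a.flowWith (contextInflow a b q) y else q y

theorem extendFlow_of_mem (hy : y ∈ a.X) :
    extendFlow a b q y = a.flowWith (contextInflow a b q) y :=
  if_pos hy

theorem extendFlow_of_notMem (hy : y ∉ a.X) : extendFlow a b q y = q y :=
  if_neg hy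

/-- One round of the flow computation on `b`, with `a` replaced by its transfer function. -/
noncomputable def summaryStep (a b : FlowGraph M) (q : ℕ → M) : ℕ → M :=
  b.stepWith (contextInflow b a (a.flowWith (contextInflow a b q))) q

theorem monotone_summaryStep : Monotone (summaryStep a b) := fun _ _ hq =>
  stepWith_le_stepWith
    (fun _ _ => finsum_le_finsum_of_le (finite_support_contextInflow _) fun _ =>
      contextInflow_mono (fun y _ => monotone_flowWith_contextInflow hq y) _ _)
    fun y _ => hq y

theorem stepWith_gmul_extendFlow_of_mem_left (hd : Disjoint a.X b.X) (hx : x ∈ a.X) :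
    (gmul a b).stepWith (gmul a b).inflow (extendFlow a b q) x =
      a.flowWith (contextInflow a b q) x := by
  have hq : ∀ y ∈ b.X, extendFlow a b q y = q y :=
    fun y hy => extendFlow_of_notMem (Finset.disjoint_right.mp hd hy)
  rw [stepWith_gmul hd hx, contextInflow_congr hq,
    stepWith_congr fun y hy => extendFlow_of_mem hy, stepWith_flowWith]

theorem stepWith_gmul_extendFlow_of_mem_right (hd : Disjoint a.X b.X) (hx : x ∈ b.X) :
    (gmul a b).stepWith (gmul a b).inflow (extendFlow a b q) x = summaryStep a b q x := by
  have hq : ∀ y ∈ b.X, extendFlow a b q y = q y :=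
    fun y hy => extendFlow_of_notMem (Finset.disjoint_right.mp hd hy)
  rw [gmul_comm hd, stepWith_gmul hd.symm hx, stepWith_congr hq,
    contextInflow_congr fun y hy => extendFlow_of_mem hy, summaryStep]

theorem flowWith_contextInflow_le_flow (hd : Disjoint a.X b.X) :
    a.flowWith (contextInflow a b (gmul a b).flow) ≤ (gmul a b).flow := by
  refine flowWith_le fun x => ?_
  by_cases hx : x ∈ a.X
  · rw [← stepWith_gmul hd hx, flow, stepWith_flowWith]
  · rw [stepWith_of_notMem hx]
    exact zero_le

theorem flow_gmul_eq_flowWith (hd : Disjoint a.X b.X) (hx : x ∈ a.X) :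
    (gmul a b).flow x = a.flowWith (contextInflow a b (gmul a b).flow) x := by
  have hle := flowWith_contextInflow_le_flow hd
  have hext : extendFlow a b (gmul a b).flow ≤ (gmul a b).flow := fun y => by
    by_cases hy : y ∈ a.X
    · exact (extendFlow_of_mem hy).trans_le (hle y)
    · exact (extendFlow_of_notMem hy).le
  have hflow : (gmul a b).flow ≤ extendFlow a b (gmul a b).flow := by
    refine flowWith_le fun y => ?_
    by_cases hy : y ∈ a.X
    · rw [stepWith_gmul_extendFlow_of_mem_left hd hy]
      exact (extendFlow_of_mem hy).symm.le
    · calc _ ≤ (gmul a b).stepWith (gmul a b).inflow (gmul a b).flow y := monotone_stepWith hext y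
        _ = (gmul a b).flow y := by rw [flow, stepWith_flowWith]
        _ = extendFlow a b (gmul a b).flow y := (extendFlow_of_notMem hy).symm
  exact le_antisymm ((hflow x).trans (extendFlow_of_mem hx).le) (hle x)

theorem kleeneFix_summaryStep_le_flow (hd : Disjoint a.X b.X) :
    kleeneFix (summaryStep a b) ≤ (gmul a b).flow := by
  refine kleeneFix_le monotone_summaryStep fun x => ?_
  by_cases hx : x ∈ b.X
  · rw [summaryStep, ← contextInflow_congr fun y hy => flow_gmul_eq_flowWith hd hy,
      ← stepWith_gmul hd.symm hx, ← gmul_comm hd, flow, stepWith_flowWith]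
  · rw [summaryStep, stepWith_of_notMem hx]
    exact zero_le

theorem stepWith_gmul_extendFlow_le (hd : Disjoint a.X b.X) (hq : q ≤ summaryStep a b q) :
    (gmul a b).stepWith (gmul a b).inflow (extendFlow a b q) ≤
      extendFlow a b (summaryStep a b q) := by
  intro x
  by_cases hxa : x ∈ a.X
  · rw [stepWith_gmul_extendFlow_of_mem_left hd hxa, extendFlow_of_mem hxa]
    exact monotone_flowWith_contextInflow hq x
  by_cases hxb : x ∈ b.X
  · rw [stepWith_gmul_extendFlow_of_mem_right hd hxb, extendFlow_of_notMem hxa]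
  · rw [stepWith_of_notMem (Finset.notMem_union.2 ⟨hxa, hxb⟩)]
    exact zero_le

theorem flow_gmul_eq_kleeneFix_summaryStep (hd : Disjoint a.X b.X) (hx : x ∈ b.X) :
    (gmul a b).flow x = kleeneFix (summaryStep a b) x := by
  refine le_antisymm ?_ (kleeneFix_summaryStep_le_flow hd x)
  set p : ℕ → ℕ → M := fun n => (summaryStep a b)^[n] 0
  have hiter : ∀ n, ((gmul a b).stepWith (gmul a b).inflow)^[n] 0 ≤ extendFlow a b (p n) := by
    intro n
    induction n with
    | zero => exact fun _ => zero_le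
    | succ n ih =>
      have hp : p (n + 1) = summaryStep a b (p n) := iterate_succ_apply' ..
      have hpn : p n ≤ p (n + 1) := fun y => monotone_iterate_zero monotone_summaryStep y n.le_succ
      rw [iterate_succ_apply', hp]
      exact (monotone_stepWith ih).trans (stepWith_gmul_extendFlow_le hd (hp ▸ hpn))
  exact csup_mono (monotone_iterate_zero monotone_stepWith x)
    (monotone_iterate_zero monotone_summaryStep x) fun n =>
      (hiter n x).trans (extendFlow_of_notMem (Finset.disjoint_right.mp hd hx)).le

theorem MDef.inflow_eq_contextInflow (h : MDef s u) :
    s.inflow = contextInflow s u (gmul s u).flow := by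
  funext y x
  by_cases hy : y ∈ u.X
  · by_cases hx : x ∈ s.X
    · rw [contextInflow_of_mem hy hx, h.2.2.2 y hy]
      exact (h.2.1 x hx y hy).2.symm
    · rw [inflow_eq_zero_of_notMem hx, contextInflow, if_pos hy, if_neg hx]
  · rw [contextInflow_of_notMem hy]

noncomputable def inContext (a b : FlowGraph M) (hd : Disjoint a.X b.X) (d : ℕ → M) :
    FlowGraph M where
  X := a.X
  E := a.E
  inflow := contextInflow a b d
  econt := a.econt
  edom := a.edom
  inflow_fin _ := finite_support_contextInflow _
  inflow_dom y x hne := by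
    by_cases hy : y ∈ b.X
    · by_cases hx : x ∈ a.X
      · exact ⟨Finset.disjoint_right.mp hd hy, hx⟩
      · exact absurd (by simp [contextInflow, hy, hx]) hne
    · rw [contextInflow_of_notMem hy] at hne
      exact a.inflow_dom y x hne

theorem flow_inContext (hd : Disjoint a.X b.X) (hx : x ∈ a.X) :
    (a.inContext b hd (gmul a b).flow).flow x = (gmul a b).flow x :=
  (flow_gmul_eq_flowWith hd hx).symm

theorem flow_inContext_right (hd : Disjoint a.X b.X) (hx : x ∈ b.X) :
    (b.inContext a hd.symm (gmul a b).flow).flow x = (gmul a b).flow x := by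
  rw [gmul_comm hd]
  exact flow_inContext hd.symm hx

theorem gmul_inContext (hd : Disjoint a.X b.X) :
    gmul (a.inContext b hd d) (b.inContext a hd.symm d) = gmul a b := by
  refine ext rfl rfl (funext₂ fun y x => ?_)
  show (if y ∈ a.X ∪ b.X then 0 else contextInflow a b d y x + contextInflow b a d y x) =
    if y ∈ a.X ∪ b.X then 0 else a.inflow y x + b.inflow y x
  split_ifs with hy
  · rfl
  · rw [Finset.mem_union, not_or] at hy
    rw [contextInflow_of_notMem hy.2, contextInflow_of_notMem hy.1]

theorem mdef_inContext (hd : Disjoint a.X b.X) :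
    MDef (a.inContext b hd (gmul a b).flow) (b.inContext a hd.symm (gmul a b).flow) := by
  refine ⟨hd, fun x (hx : x ∈ a.X) y (hy : y ∈ b.X) => ⟨?_, ?_⟩, fun x hx => ?_, fun y hy => ?_⟩
  · show a.E x y _ = contextInflow b a _ x y
    rw [flow_inContext hd hx, contextInflow_of_mem hx hy]
  · show b.E y x _ = contextInflow a b _ y x
    rw [flow_inContext_right hd hy, contextInflow_of_mem hy hx]
  · rw [gmul_inContext hd, flow_inContext hd hx]
  · rw [gmul_inContext hd, flow_inContext_right hd hy]

end FlowGraph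

section Comparison

variable {r : M → M → Prop} {s t u : FlowGraph M}

theorem IsEstimator.finsum_contextInflow (hr : IsEstimator r) (hX : s.X = t.X)
    (hin : s.inflow = t.inflow) {d d' : ℕ → M}
    (hd : ∀ y ∈ u.X, r (d y) (d' y)) {x : ℕ} (hx : x ∈ s.X) :
    r (∑ᶠ y, contextInflow s u d y x) (∑ᶠ y, contextInflow t u d' y x) := by
  rw [FlowGraph.finsum_contextInflow hx, FlowGraph.finsum_contextInflow (hX ▸ hx), hin]
  exact hr.add (hr.sum _ fun y hy => hr.map (u.econt y x hy) (hd y hy)) (hr.refl _)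

theorem ctxLe.rel_flow_gmul (hr : IsEstimator r) (hst : ctxLe r s t) (hsu : MDef s u) {x : ℕ}
    (hx : x ∈ u.X) :
    r ((gmul s u).flow x) ((gmul t u).flow x) := by
  obtain ⟨hX, hin, htf⟩ := hst
  have hd : Disjoint s.X u.X := hsu.1
  rw [flow_gmul_eq_kleeneFix_summaryStep hd hx, flow_gmul_eq_kleeneFix_summaryStep (hX ▸ hd) hx]
  refine hr.kleeneFix monotone_summaryStep monotone_summaryStep (fun c c' hc hcc' => ?_) x
  have hbound : contextInflow s u c ≤ s.inflow := by
    rw [hsu.inflow_eq_contextInflow]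
    exact contextInflow_mono fun y _ => (hc.trans (kleeneFix_summaryStep_le_flow hd)) y
  refine hr.stepWith (fun z hz => ?_) fun y _ => hcc' y
  rw [finsum_contextInflow hz, finsum_contextInflow hz]
  refine hr.add (hr.trans (htf _ hbound z (Finset.disjoint_right.mp hd hz)) ?_)
    (by rw [hX]; exact hr.refl _)
  exact hr.tf (fun w hw => hr.finsum_contextInflow hX hin (fun y _ => hcc' y) (hX ▸ hw)) z

theorem ctxLe.inflowLe_inContext_left (hr : IsEstimator r) (hst : ctxLe r s t) (hsu : MDef s u)
    (hd : Disjoint t.X u.X) :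
    inflowLe r u.X t.X t.inflow (t.inContext u hd (gmul t u).flow).inflow := by
  refine ⟨fun y hy x => (contextInflow_of_notMem hy).symm, fun x hx => hr.sum _ fun y hy => ?_⟩
  have hs : t.inflow y x = u.E y x ((gmul s u).flow y) := by
    rw [← hst.2.1, hsu.inflow_eq_contextInflow, contextInflow_of_mem hy (hst.1 ▸ hx)]
  have ht : (t.inContext u hd (gmul t u).flow).inflow y x = u.E y x ((gmul t u).flow y) :=
    contextInflow_of_mem hy hx
  rw [hs, ht]
  exact hr.map (u.econt y x hy) (hst.rel_flow_gmul hr hsu hy)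

theorem ctxLe.inflowLe_inContext_right (hr : IsEstimator r) (hst : ctxLe r s t)
    (hsu : MDef s u) (hd : Disjoint t.X u.X) :
    inflowLe r t.X u.X u.inflow (u.inContext t hd.symm (gmul t u).flow).inflow := by
  refine ⟨fun y hy x => (contextInflow_of_notMem hy).symm, fun x hx => ?_⟩
  have hs : ∑ y ∈ t.X, u.inflow y x = s.tf s.inflow x := by
    rw [← hst.1]
    exact Finset.sum_congr rfl fun y hy => (hsu.2.1 y hy x hx).1.symm
  have ht : ∑ y ∈ t.X, (u.inContext t hd.symm (gmul t u).flow).inflow y x =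
      t.tf (contextInflow t u (gmul t u).flow) x :=
    Finset.sum_congr rfl fun y hy => by
      rw [show (u.inContext t hd.symm _).inflow y x = contextInflow u t _ y x from rfl,
        contextInflow_of_mem hy hx, flow_gmul_eq_flowWith hd hy]
  rw [hs, ht]
  refine hr.trans (hst.2.2 _ (fun _ _ => le_rfl) x (Finset.disjoint_right.mp hsu.1 hx))
    (hr.tf (fun z hz => ?_) x)
  rw [hsu.inflow_eq_contextInflow]
  exact hr.finsum_contextInflow hst.1 hst.2.1 (fun y hy => hst.rel_flow_gmul hr hsu hy)
    (hst.1 ▸ hz)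

end Comparison

def upwardClosure (r : M → M → Prop) (t u : FlowGraph M) : Set (FlowGraph M) :=
  {w | w.X = u.X ∧ w.E = u.E ∧ inflowLe r t.X u.X u.inflow w.inflow}

section Predicates

variable {r : M → M → Prop} {t u : FlowGraph M}

theorem gabs_eq_upwardClosure
    (h : (∃ s, ctxLe r s t ∧ MDef s u) ∨ (∃ v, ctxLe r v u ∧ MDef v t)) :
    gabs r t u = upwardClosure r t u :=
  if_pos h

theorem gabs_eq_top
    (h : ¬((∃ s, ctxLe r s t ∧ MDef s u) ∨ (∃ v, ctxLe r v u ∧ MDef v t))) :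
    gabs r t u = ⊤ :=
  if_neg h

theorem exists_mdef_of_ctxLe (hr : IsEstimator r) (h : ∃ s, ctxLe r s t ∧ MDef s u) :
    ∃ a ∈ upwardClosure r u t, ∃ b ∈ upwardClosure r t u, MDef a b ∧ gmul t u = gmul a b := by
  obtain ⟨s, hst, hsu⟩ := h
  have hd : Disjoint t.X u.X := hst.1 ▸ hsu.1
  exact ⟨t.inContext u hd (gmul t u).flow, ⟨rfl, rfl, hst.inflowLe_inContext_left hr hsu hd⟩,
    u.inContext t hd.symm (gmul t u).flow, ⟨rfl, rfl, hst.inflowLe_inContext_right hr hsu hd⟩,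
    mdef_inContext hd, (gmul_inContext hd).symm⟩

theorem memFP_gmul_starFP_gabs (hr : IsEstimator r) (hd : Disjoint t.X u.X) :
    memFP (gmul t u) (starFP (gabs r u t) (gabs r t u)) := by
  by_cases h : (∃ s, ctxLe r s t ∧ MDef s u) ∨ (∃ v, ctxLe r v u ∧ MDef v t)
  · rw [gabs_eq_upwardClosure h.symm, gabs_eq_upwardClosure h]
    rcases h with h | h
    · exact exists_mdef_of_ctxLe hr h
    · obtain ⟨b, hb, a, ha, hba, he⟩ := exists_mdef_of_ctxLe hr h
      exact ⟨a, ha, b, hb, hba.symm, (gmul_comm hd).trans (he.trans (gmul_comm hba.1))⟩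
  · rw [gabs_eq_top fun h' => h h'.symm]
    trivial

theorem gstarFP_singleton_le {P : FPred M} (h : Disjoint t.X u.X → memFP (gmul t u) P) :
    gstarFP (({t} : Set (FlowGraph M)) : FPred M) (({u} : Set (FlowGraph M)) : FPred M) ≤ P := by
  induction P using WithTop.recTopCoe with
  | top => exact le_top
  | coe S => exact WithTop.coe_le_coe.2 fun _ ⟨_, rfl, _, rfl, hd, hw⟩ => hw ▸ h hd

end Predicates

open FlowGraph in
/-- The upward-closure family is an approximate ghost
multiplication: `t ⌢ u ⊑ t ⌢♯ u := [u]♯(t) ⋆ [t]♯(u)` for all flow graphs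
`t`, `u`; in particular, if some `s ⪯ctx t` composes with `u`, then
`t ⌢ u ∈ [u]♯(t) ⋆ [t]♯(u)`. -/
theorem approximate_ghost_multiplication (r : M → M → Prop) (hr : IsEstimator r) :
    (∀ t u : FlowGraph M,
      gstarFP (({t} : Set (FlowGraph M)) : FPred M) (({u} : Set (FlowGraph M)) : FPred M) ≤
        starFP (gabs r u t) (gabs r t u)) ∧
    (∀ t u : FlowGraph M, (∃ s : FlowGraph M, ctxLe r s t ∧ MDef s u) →
      memFP (gmul t u) (starFP (gabs r u t) (gabs r t u))) :=
  ⟨fun _ _ => gstarFP_singleton_le (memFP_gmul_starFP_gabs hr),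
    fun _ _ ⟨_, hst, hsu⟩ => memFP_gmul_starFP_gabs hr (hst.1 ▸ hsu.1)⟩
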